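/- Let W be symmetric with nonnegative entries and degree matrix D. For a nonempty proper subset A of V with complement B, define the indicator-based vector y with y_i = 1/assoc(A,V) for i ∈ A and y_i = -1/assoc(B,V) for i ∈ B. Then y^T (D - W) y / (y^T D y) = Ncut(A,B). -/

import Mathlib

open scoped Matrix

theorem stmt_18 {n : ℕ} (W : Matrix (Fin n) (Fin n) ℝ) (hsymm : W.IsSymm)
    (hnn : ∀ i j, 0 ≤ W i j)
    (D : Matrix (Fin n) (Fin n) ℝ) (hD : D = Matrix.diagonal fun i => ∑ j, W i j)
    (A : Finset (Fin n)) (hA : A.Nonempty) (hB : Aᶜ.Nonempty)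
    (hassocA : 0 < ∑ i ∈ A, ∑ j, W i j) (hassocB : 0 < ∑ i ∈ Aᶜ, ∑ j, W i j)
    (y : Fin n → ℝ)
    (hy : y = fun i => if i ∈ A then (∑ i ∈ A, ∑ j, W i j)⁻¹
        else -(∑ i ∈ Aᶜ, ∑ j, W i j)⁻¹) :
    y ⬝ᵥ (D - W).mulVec y / (y ⬝ᵥ D.mulVec y)
      = (∑ i ∈ A, ∑ j ∈ Aᶜ, W i j) / (∑ i ∈ A, ∑ j, W i j)
        + (∑ i ∈ A, ∑ j ∈ Aᶜ, W i j) / (∑ i ∈ Aᶜ, ∑ j, W i j) := by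
  subst hD hy
  set a := ∑ i ∈ A, ∑ j, W i j with ha
  set b := ∑ i ∈ Aᶜ, ∑ j, W i j with hb
  set c := ∑ i ∈ A, ∑ j ∈ Aᶜ, W i j with hc
  have ha0 : a ≠ 0 := ne_of_gt hassocA
  have hb0 : b ≠ 0 := ne_of_gt hassocB
  set yv : Fin n → ℝ := fun i => if i ∈ A then a⁻¹ else -b⁻¹ with hyv
  -- block sums
  have hcBA : ∑ i ∈ Aᶜ, ∑ j ∈ A, W i j = c := by
    rw [hc]; refine Finset.sum_comm.trans ?_
    exact Finset.sum_congr rfl fun i _ => Finset.sum_congr rfl fun j _ => hsymm.apply i j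
  have hAA : ∑ i ∈ A, ∑ j ∈ A, W i j = a - c := by
    have : a = (∑ i ∈ A, ∑ j ∈ A, W i j) + c := by
      rw [ha, hc, ← Finset.sum_add_distrib]
      exact Finset.sum_congr rfl fun i _ => (Finset.sum_add_sum_compl A _).symm
    linarith
  have hBB : ∑ i ∈ Aᶜ, ∑ j ∈ Aᶜ, W i j = b - c := by
    have : b = c + ∑ i ∈ Aᶜ, ∑ j ∈ Aᶜ, W i j := by
      rw [hb, ← hcBA, ← Finset.sum_add_distrib]
      exact Finset.sum_congr rfl fun i _ => (Finset.sum_add_sum_compl A _).symm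
    linarith
  -- denominator
  have hden : yv ⬝ᵥ (Matrix.diagonal fun i => ∑ j, W i j).mulVec yv = a⁻¹ + b⁻¹ := by
    simp only [dotProduct, Matrix.mulVec_diagonal]
    rw [← Finset.sum_add_sum_compl A]
    have h1 : ∑ i ∈ A, yv i * ((∑ j, W i j) * yv i) = a⁻¹ * a⁻¹ * a := by
      rw [ha, Finset.mul_sum]
      exact Finset.sum_congr rfl fun i hi => by rw [hyv]; simp [if_pos hi]; ring
    have h2 : ∑ i ∈ Aᶜ, yv i * ((∑ j, W i j) * yv i) = b⁻¹ * b⁻¹ * b := by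
      rw [hb, Finset.mul_sum]
      refine Finset.sum_congr rfl fun i hi => ?_
      rw [hyv]; simp [if_neg (Finset.mem_compl.mp hi)]; ring
    rw [h1, h2]
    field_simp
  -- W part
  have hrow : ∀ i, (∑ j, W i j * yv j)
      = a⁻¹ * (∑ j ∈ A, W i j) - b⁻¹ * (∑ j ∈ Aᶜ, W i j) := by
    intro i
    rw [← Finset.sum_add_sum_compl A (fun j => W i j * yv j), Finset.mul_sum, Finset.mul_sum,
        sub_eq_add_neg, ← Finset.sum_neg_distrib]
    congr 1
    · exact Finset.sum_congr rfl fun j hj => by rw [hyv]; simp [if_pos hj]; ring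
    · exact Finset.sum_congr rfl fun j hj => by
        rw [hyv]; simp [if_neg (Finset.mem_compl.mp hj)]; ring
  have hW : yv ⬝ᵥ W.mulVec yv
      = a⁻¹ * a⁻¹ * (a - c) - a⁻¹ * b⁻¹ * c - b⁻¹ * a⁻¹ * c + b⁻¹ * b⁻¹ * (b - c) := by
    simp only [dotProduct, Matrix.mulVec]
    rw [← Finset.sum_add_sum_compl A]
    have h1 : ∑ i ∈ A, yv i * (∑ j, W i j * yv j)
        = a⁻¹ * a⁻¹ * (a - c) - a⁻¹ * b⁻¹ * c := by
      calc ∑ i ∈ A, yv i * (∑ j, W i j * yv j)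
          = ∑ i ∈ A, (a⁻¹ * (a⁻¹ * ∑ j ∈ A, W i j) - a⁻¹ * (b⁻¹ * ∑ j ∈ Aᶜ, W i j)) :=
            Finset.sum_congr rfl fun i hi => by rw [hrow i, hyv]; simp [if_pos hi]; ring
        _ = a⁻¹ * a⁻¹ * (a - c) - a⁻¹ * b⁻¹ * c := by
            rw [Finset.sum_sub_distrib, ← Finset.mul_sum, ← Finset.mul_sum, ← Finset.mul_sum,
                ← Finset.mul_sum, hAA, ← hc]
            ring
    have h2 : ∑ i ∈ Aᶜ, yv i * (∑ j, W i j * yv j)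
        = -(b⁻¹ * a⁻¹ * c) + b⁻¹ * b⁻¹ * (b - c) := by
      calc ∑ i ∈ Aᶜ, yv i * (∑ j, W i j * yv j)
          = ∑ i ∈ Aᶜ, ((-b⁻¹) * (a⁻¹ * ∑ j ∈ A, W i j) + b⁻¹ * (b⁻¹ * ∑ j ∈ Aᶜ, W i j)) :=
            Finset.sum_congr rfl fun i hi => by
              rw [hrow i, hyv]; simp [if_neg (Finset.mem_compl.mp hi)]; ring
        _ = -(b⁻¹ * a⁻¹ * c) + b⁻¹ * b⁻¹ * (b - c) := by
            rw [Finset.sum_add_distrib, ← Finset.mul_sum, ← Finset.mul_sum, ← Finset.mul_sum,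
                ← Finset.mul_sum, hBB, hcBA]
            ring
    rw [h1, h2]; ring
  have hnum : yv ⬝ᵥ ((Matrix.diagonal fun i => ∑ j, W i j) - W).mulVec yv
      = c * (a⁻¹ + b⁻¹) ^ 2 := by
    rw [Matrix.sub_mulVec, dotProduct_sub, hden, hW]
    field_simp
    ring
  rw [hnum, hden]
  have hab : a⁻¹ + b⁻¹ ≠ 0 := by positivity
  field_simp
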